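/- Let (p_n) be a sequence of edge probabilities with n·p_n → 0, let G = G(n, p_n) be the Erdős–Rényi random graph, and let X_0 be an independent uniformly random 3-coloring of its vertices. Then the probability that the 3-color CCA trajectory synchronizes on every connected component of G tends to 1 as n → ∞. -/

import Mathlib

noncomputable section
attribute [local instance] Classical.propDecidable

open Filter MeasureTheory

/-- One step of the 3-color cyclic cellular automaton. -/
def ccaStep {V : Type*} (G : SimpleGraph V) (X : V → ZMod 3) : V → ZMod 3 :=
  fun v => if ∃ u, G.Adj v u ∧ X u = X v + 1 then X v + 1 else X v

/-- The CCA trajectory started from `X₀`. -/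
def ccaTraj {V : Type*} (G : SimpleGraph V) (X₀ : V → ZMod 3) : ℕ → V → ZMod 3 :=
  fun t => (ccaStep G)^[t] X₀

/-- A vertex is excited at time `t` for CCA iff its color advances. -/
def ccaExcited {V : Type*} (G : SimpleGraph V) (X₀ : V → ZMod 3) (t : ℕ) (v : V) : Prop :=
  ccaTraj G X₀ (t + 1) v = ccaTraj G X₀ t v + 1

/-- Number of excitations of `x` at times `0, …, t-1` (CCA). -/
def ccaNe {V : Type*} (G : SimpleGraph V) (X₀ : V → ZMod 3) (t : ℕ) (x : V) : ℕ :=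
  ((Finset.range t).filter fun s => ccaExcited G X₀ s x).card

/-- The random graph on `Fin n` determined by the edge indicators `ω`. -/
def erGraph (n : ℕ) (ω : Sym2 (Fin n) → Bool) : SimpleGraph (Fin n) :=
  SimpleGraph.fromEdgeSet {e : Sym2 (Fin n) | ω e = true}

/-!
On a forest the colour differences across edges, lifted to `{-1, 0, 1}`, integrate to an integer
potential `h`. The height `h v + (number of excitations of v so far)` then lifts the colour of `v`
modulo 3 at every time, and across each edge the height difference stays equal to the lifted colour
difference. A vertex is excited exactly when a neighbour is one unit higher, so the maximal height
of a component is never exceeded and spreads to every neighbour of a maximal vertex in one step;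
eventually the whole component sits at the maximal height and carries a single colour.

When `n p → 0` the Erdős–Rényi graph is a forest with high probability: the expected number of
cycles of length `k` is at most `(n p)^k`, and `∑_{k ≥ 3} (n p)^k ≤ (n p)^3 / (1 - n p)`.
-/

namespace SimpleGraph

variable {V : Type*} {G : SimpleGraph V}

namespace Walk

def dartSum (f : V → V → ℤ) {u v : V} (p : G.Walk u v) : ℤ :=
  (p.darts.map fun d => f d.fst d.snd).sum

variable (f : V → V → ℤ)

@[simp] lemma dartSum_nil {u : V} : (nil : G.Walk u u).dartSum f = 0 := rfl

@[simp] lemma dartSum_cons {u v w : V} (h : G.Adj u v) (p : G.Walk v w) :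
    (cons h p).dartSum f = f u v + p.dartSum f := rfl

@[simp] lemma dartSum_append {u v w : V} (p : G.Walk u v) (q : G.Walk v w) :
    (p.append q).dartSum f = p.dartSum f + q.dartSum f := by
  simp [dartSum, darts_append]

@[simp] lemma dartSum_copy {u v u' v' : V} (p : G.Walk u v) (hu : u = u') (hv : v = v') :
    (p.copy hu hv).dartSum f = p.dartSum f := by
  subst hu hv; rfl

lemma dartSum_bypass [DecidableEq V] (hG : G.IsAcyclic) (hf : ∀ u v, f v u = -f u v)
    {u v : V} (p : G.Walk u v) : p.bypass.dartSum f = p.dartSum f := by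
  induction p with
  | nil => rfl
  | @cons u b v h p ih =>
    rw [bypass]
    split_ifs with hu
    · -- the path from `b` back to `u` inside `p.bypass` is the edge `b u`
      have hback : p.bypass.takeUntil u hu = cons h.symm nil :=
        have := hG.subsingleton_path b u
        congrArg Subtype.val <| Subsingleton.elim
          ⟨_, p.bypass_isPath.takeUntil hu⟩ ⟨cons h.symm nil, by simp [h.ne']⟩
      have hsplit := congrArg (dartSum f) (p.bypass.take_spec hu)
      rw [dartSum_append, hback, ih] at hsplit
      simp only [dartSum_cons, dartSum_nil, hf u b] at hsplit
      simp only [dartSum_cons]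
      linarith
    · simp [ih]

lemma dartSum_eq_of_isAcyclic (hG : G.IsAcyclic) (hf : ∀ u v, f v u = -f u v)
    {u v : V} (p q : G.Walk u v) : p.dartSum f = q.dartSum f := by
  have := hG.subsingleton_path u v
  have hpq : p.bypass = q.bypass :=
    congrArg Subtype.val (Subsingleton.elim ⟨_, p.bypass_isPath⟩ ⟨_, q.bypass_isPath⟩)
  rw [← dartSum_bypass f hG hf p, ← dartSum_bypass f hG hf q, hpq]

end Walk

lemma Reachable.eq_of_forall_adj {α : Type*} {g : V → α} (hg : ∀ u v, G.Adj u v → g u = g v)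
    {x y : V} (hxy : G.Reachable x y) : g x = g y := by
  obtain ⟨p⟩ := hxy
  induction p with
  | nil => rfl
  | cons h _ ih => exact (hg _ _ h).trans ih

lemma IsAcyclic.exists_potential (hG : G.IsAcyclic) (f : V → V → ℤ)
    (hf : ∀ u v, f v u = -f u v) : ∃ h : V → ℤ, ∀ u v, G.Adj u v → h v - h u = f u v := by
  have hroot (v : V) : G.Reachable (G.connectedComponentMk v).out v :=
    ConnectedComponent.exact (G.connectedComponentMk v).out_eq
  refine ⟨fun v => (hroot v).some.dartSum f, fun u v huv => ?_⟩
  have hsame : (G.connectedComponentMk u).out = (G.connectedComponentMk v).out := by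
    rw [ConnectedComponent.connectedComponentMk_eq_of_adj huv]
  have := Walk.dartSum_eq_of_isAcyclic f hG hf (hroot v).some
    (((hroot u).some.append (.cons huv .nil)).copy hsame rfl)
  simp only [this, Walk.dartSum_copy, Walk.dartSum_append, Walk.dartSum_cons, Walk.dartSum_nil]
  ring

end SimpleGraph

def cyclicDiff (a b : ZMod 3) : ℤ :=
  if b = a + 1 then 1 else if a = b + 1 then -1 else 0

lemma cyclicDiff_swap (a b : ZMod 3) : cyclicDiff b a = -cyclicDiff a b := by
  revert a b; decide

lemma cyclicDiff_mem_Icc (a b : ZMod 3) : cyclicDiff a b ∈ Set.Icc (-1) 1 := by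
  unfold cyclicDiff; split_ifs <;> simp

lemma cyclicDiff_eq_one_iff {a b : ZMod 3} : cyclicDiff a b = 1 ↔ b = a + 1 := by
  revert a b; decide

@[simp] lemma intCast_cyclicDiff (a b : ZMod 3) : (cyclicDiff a b : ZMod 3) = b - a := by
  revert a b; decide

lemma cyclicDiff_add_ite (a b : ZMod 3) (P Q : Prop) [Decidable P] [Decidable Q]
    (hP : b = a + 1 → P) (hQ : a = b + 1 → Q) :
    cyclicDiff (a + if P then 1 else 0) (b + if Q then 1 else 0) =
      cyclicDiff a b + (if Q then 1 else 0) - (if P then 1 else 0) := by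
  have hP' := mt hP
  have hQ' := mt hQ
  clear hP hQ
  by_cases hp : P <;> by_cases hq : Q <;>
    simp only [hp, hq, if_true, if_false, not_true_eq_false, not_false_eq_true,
      add_zero, sub_zero] at hP' hQ' ⊢ <;> revert a b <;> decide

section Dynamics

variable {V : Type*} (G : SimpleGraph V) (X₀ : V → ZMod 3)

lemma ccaTraj_succ (t : ℕ) : ccaTraj G X₀ (t + 1) = ccaStep G (ccaTraj G X₀ t) :=
  Function.iterate_succ_apply' _ _ _

lemma ccaExcited_iff {t : ℕ} {v : V} :
    ccaExcited G X₀ t v ↔ ∃ u, G.Adj v u ∧ ccaTraj G X₀ t u = ccaTraj G X₀ t v + 1 := by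
  have hne : ∀ a : ZMod 3, a ≠ a + 1 := by decide
  simp only [ccaExcited, ccaTraj_succ, ccaStep]
  split_ifs with h <;> simp [h, hne]

lemma ccaTraj_succ_apply (t : ℕ) (v : V) :
    ccaTraj G X₀ (t + 1) v = ccaTraj G X₀ t v + if ccaExcited G X₀ t v then 1 else 0 := by
  split_ifs with h
  · exact h
  · simp only [ccaExcited_iff, ccaTraj_succ, ccaStep] at h ⊢
    simp [h]

lemma ccaNe_succ (t : ℕ) (v : V) :
    ccaNe G X₀ (t + 1) v = ccaNe G X₀ t v + if ccaExcited G X₀ t v then 1 else 0 := by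
  simp only [ccaNe, Finset.range_add_one, Finset.filter_insert]
  split_ifs <;> simp [Finset.card_insert_of_notMem]

lemma ccaNe_mono (v : V) : Monotone fun t => ccaNe G X₀ t v := fun _ _ hst =>
  Finset.card_le_card (Finset.filter_subset_filter _ (Finset.range_subset_range.mpr hst))

lemma ccaTraj_eq_add_ccaNe (t : ℕ) (v : V) : ccaTraj G X₀ t v = X₀ v + ccaNe G X₀ t v := by
  induction t with
  | zero => simp [ccaTraj, ccaNe]
  | succ t ih =>
    rw [ccaTraj_succ_apply, ccaNe_succ, ih]
    split_ifs <;> push_cast <;> ring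

lemma cyclicDiff_ccaTraj {u v : V} (huv : G.Adj u v) (t : ℕ) :
    cyclicDiff (ccaTraj G X₀ t u) (ccaTraj G X₀ t v) =
      cyclicDiff (X₀ u) (X₀ v) + ccaNe G X₀ t v - ccaNe G X₀ t u := by
  induction t with
  | zero => simp [ccaTraj, ccaNe]
  | succ t ih =>
    rw [ccaTraj_succ_apply, ccaTraj_succ_apply, cyclicDiff_add_ite, ih, ccaNe_succ, ccaNe_succ]
    · split_ifs <;> push_cast <;> ring
    · exact fun h => (ccaExcited_iff G X₀).mpr ⟨v, huv, h⟩
    · exact fun h => (ccaExcited_iff G X₀).mpr ⟨u, huv.symm, h⟩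

end Dynamics

section Height

variable {V : Type*}

def ccaHeight (G : SimpleGraph V) (X₀ : V → ZMod 3) (h : V → ℤ) (t : ℕ) (v : V) : ℤ :=
  h v + ccaNe G X₀ t v

variable {G : SimpleGraph V} {X₀ : V → ZMod 3} {h : V → ℤ}

lemma ccaHeight_succ (t : ℕ) (v : V) :
    ccaHeight G X₀ h (t + 1) v = ccaHeight G X₀ h t v + if ccaExcited G X₀ t v then 1 else 0 := by
  simp only [ccaHeight, ccaNe_succ]
  split_ifs <;> push_cast <;> ring

lemma ccaHeight_mono (v : V) : Monotone fun t => ccaHeight G X₀ h t v := fun _ _ hst => by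
  simpa [ccaHeight] using ccaNe_mono G X₀ v hst

variable (hh : ∀ u v, G.Adj u v → h v - h u = cyclicDiff (X₀ u) (X₀ v))
include hh

lemma ccaHeight_sub_of_adj {u v : V} (huv : G.Adj u v) (t : ℕ) :
    ccaHeight G X₀ h t v - ccaHeight G X₀ h t u =
      cyclicDiff (ccaTraj G X₀ t u) (ccaTraj G X₀ t v) := by
  rw [cyclicDiff_ccaTraj G X₀ huv, ← hh u v huv, ccaHeight, ccaHeight]
  ring

lemma ccaTraj_eq_of_ccaHeight_eq {x y : V} (hxy : G.Reachable x y) {t : ℕ}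
    (ht : ccaHeight G X₀ h t x = ccaHeight G X₀ h t y) : ccaTraj G X₀ t x = ccaTraj G X₀ t y := by
  have hconst : ((h x : ℤ) : ZMod 3) - X₀ x = (h y : ZMod 3) - X₀ y := by
    refine hxy.eq_of_forall_adj (g := fun v => (h v : ZMod 3) - X₀ v) fun u v huv => ?_
    have := congrArg (fun z : ℤ => (z : ZMod 3)) (hh u v huv)
    simp only [Int.cast_sub, intCast_cyclicDiff] at this
    linear_combination -this
  have := congrArg (fun z : ℤ => (z : ZMod 3)) ht
  simp only [ccaHeight, Int.cast_add, Int.cast_natCast] at this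
  rw [ccaTraj_eq_add_ccaNe, ccaTraj_eq_add_ccaNe]
  linear_combination this - hconst

lemma ccaHeight_le_of_reachable {w : V} {M : ℤ}
    (hM : ∀ v, G.Reachable w v → ccaHeight G X₀ h 0 v ≤ M) (t : ℕ) :
    ∀ v, G.Reachable w v → ccaHeight G X₀ h t v ≤ M := by
  induction t with
  | zero => exact hM
  | succ t ih =>
    intro v hv
    rw [ccaHeight_succ]
    split_ifs with hexc
    · obtain ⟨u, hvu, hcol⟩ := (ccaExcited_iff G X₀).mp hexc
      have hdiff := ccaHeight_sub_of_adj hh hvu t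
      rw [cyclicDiff_eq_one_iff.mpr hcol] at hdiff
      linarith [ih u (hv.trans hvu.reachable)]
    · simpa using ih v hv

lemma ccaHeight_eq_of_walk {w : V} {M : ℤ}
    (hM : ∀ t v, G.Reachable w v → ccaHeight G X₀ h t v ≤ M) (hw : ccaHeight G X₀ h 0 w = M)
    {v : V} (p : G.Walk v w) {t : ℕ} (ht : p.length ≤ t) : ccaHeight G X₀ h t v = M := by
  induction p generalizing t with
  | nil =>
    exact le_antisymm (hM t _ .rfl) (hw ▸ ccaHeight_mono _ (Nat.zero_le t))
  | @cons v u _ hvu q ih =>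
    obtain ⟨s, rfl⟩ : ∃ s, t = s + 1 := ⟨t - 1, by simp at ht; omega⟩
    have hu := ih hM hw (by simp at ht; omega)
    have hreach := (q.reverse.concat hvu.symm).reachable
    have hdiff := ccaHeight_sub_of_adj hh hvu s
    have hle := hM s v hreach
    refine le_antisymm (hM _ v hreach) ?_
    rw [ccaHeight_succ]
    split_ifs with hexc
    · obtain ⟨-, hhi⟩ := cyclicDiff_mem_Icc (ccaTraj G X₀ s v) (ccaTraj G X₀ s u)
      linarith
    · have : cyclicDiff (ccaTraj G X₀ s v) (ccaTraj G X₀ s u) ≠ 1 := fun h1 =>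
        hexc ((ccaExcited_iff G X₀).mpr ⟨u, hvu, cyclicDiff_eq_one_iff.mp h1⟩)
      obtain ⟨hlo, hhi⟩ := cyclicDiff_mem_Icc (ccaTraj G X₀ s v) (ccaTraj G X₀ s u)
      omega

theorem ccaTraj_synchronizes_of_potential [Finite V] {x y : V} (hxy : G.Reachable x y) :
    ∃ N, ∀ t ≥ N, ccaTraj G X₀ t x = ccaTraj G X₀ t y := by
  have : Fintype V := Fintype.ofFinite V
  obtain ⟨w, hw, hmax⟩ := Finset.exists_max_image (Finset.univ.filter (G.Reachable x))
    (ccaHeight G X₀ h 0) ⟨x, by simp⟩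
  simp only [Finset.mem_filter, Finset.mem_univ, true_and] at hw hmax
  have hM := ccaHeight_le_of_reachable (M := ccaHeight G X₀ h 0 w) hh
    (fun v hv => hmax v (hw.trans hv))
  obtain ⟨py⟩ := (hw.symm.trans hxy).symm
  obtain ⟨px⟩ := hw
  refine ⟨max px.length py.length, fun t ht => ccaTraj_eq_of_ccaHeight_eq hh hxy ?_⟩
  rw [ccaHeight_eq_of_walk hh hM rfl px (le_of_max_le_left ht.le),
    ccaHeight_eq_of_walk hh hM rfl py (le_of_max_le_right ht.le)]

end Height

theorem SimpleGraph.IsAcyclic.ccaTraj_synchronizes {V : Type*} [Finite V] {G : SimpleGraph V}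
    (hG : G.IsAcyclic) (X₀ : V → ZMod 3) {x y : V} (hxy : G.Reachable x y) :
    ∃ N, ∀ t ≥ N, ccaTraj G X₀ t x = ccaTraj G X₀ t y := by
  obtain ⟨h, hh⟩ := hG.exists_potential (fun u v => cyclicDiff (X₀ u) (X₀ v))
    (fun u v => cyclicDiff_swap _ _)
  exact ccaTraj_synchronizes_of_potential hh hxy

namespace SimpleGraph

variable {V : Type*} {G : SimpleGraph V}

lemma exists_cycle_embedding_of_not_isAcyclic (hG : ¬G.IsAcyclic) :
    ∃ k ≥ 3, ∃ f : Fin k ↪ V, ∀ i, G.Adj (f i) (f (finRotate k i)) := by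
  simp only [IsAcyclic, not_forall, not_not] at hG
  obtain ⟨v, c, hc⟩ := hG
  have hlen := hc.three_le_length
  obtain ⟨m, hm⟩ : ∃ m, c.length = m + 1 := ⟨c.length - 1, by omega⟩
  let f : Fin (m + 1) ↪ V := ⟨fun i => c.getVert i, fun i j hij =>
    Fin.ext <| hc.getVert_injOn' (by simp; omega) (by simp; omega) hij⟩
  refine ⟨m + 1, by omega, f, fun i => ?_⟩
  change G.Adj (c.getVert i) (c.getVert (finRotate (m + 1) i))
  rw [coe_finRotate]
  split_ifs with hi
  · have := c.adj_getVert_succ (i := m) (by omega)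
    rw [hi, Fin.val_last, c.getVert_zero]
    rwa [← hm, c.getVert_length] at this
  · exact c.adj_getVert_succ (by omega)

def cycleEdges [DecidableEq V] {k : ℕ} (f : Fin k → V) : Finset (Sym2 V) :=
  Finset.univ.image fun i => s(f i, f (finRotate k i))

lemma card_cycleEdges [DecidableEq V] {k : ℕ} (hk : 3 ≤ k) (f : Fin k ↪ V) :
    (cycleEdges f).card = k := by
  obtain ⟨m, rfl⟩ : ∃ m, k = m + 1 := ⟨k - 1, by omega⟩
  have hrot (i : Fin (m + 1)) : finRotate (m + 1) (finRotate (m + 1) i) ≠ i := by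
    rw [finRotate_apply, finRotate_apply, add_assoc, ne_eq, add_eq_left, Fin.ext_iff]
    simp [Fin.val_add, Nat.mod_eq_of_lt (show 2 < m + 1 by omega)]
  rw [cycleEdges, Finset.card_image_of_injective, Finset.card_univ, Fintype.card_fin]
  intro i j hij
  rcases Sym2.eq_iff.mp hij with ⟨hi, -⟩ | ⟨hi, hj⟩
  · exact f.injective hi
  · exact absurd (f.injective hi ▸ f.injective hj) (hrot j)

end SimpleGraph

open SimpleGraph in
lemma measure_not_isAcyclic_erGraph_le {n : ℕ} {β : Type*} [MeasurableSpace β]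
    (μ : Measure ((Sym2 (Fin n) → Bool) × β)) {q : ℝ} (hq : 0 ≤ q)
    (hμ : ∀ s : Finset (Sym2 (Fin n)),
      μ {ω | ∀ e ∈ s, ω.1 e = true} = ENNReal.ofReal q ^ s.card) :
    μ {ω | ¬(erGraph n ω.1).IsAcyclic} ≤
      ENNReal.ofReal (∑ k ∈ Finset.Ico 3 (n + 1), ((n : ℝ) * q) ^ k) := by
  have hcover : {ω : (Sym2 (Fin n) → Bool) × β | ¬(erGraph n ω.1).IsAcyclic} ⊆
      ⋃ k ∈ Finset.Ico 3 (n + 1), ⋃ f : Fin k ↪ Fin n,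
        {ω | ∀ e ∈ cycleEdges f, ω.1 e = true} := by
    intro ω hω
    obtain ⟨k, hk, f, hf⟩ := exists_cycle_embedding_of_not_isAcyclic hω
    have hkn : k ≤ n := by simpa using Fintype.card_le_of_embedding f
    simp only [Set.mem_iUnion, Finset.mem_Ico]
    refine ⟨k, ⟨hk, by omega⟩, f, fun e he => ?_⟩
    obtain ⟨i, -, rfl⟩ := Finset.mem_image.mp he
    exact ((fromEdgeSet_adj _).mp (hf i)).1
  calc μ {ω | ¬(erGraph n ω.1).IsAcyclic}
      ≤ ∑ k ∈ Finset.Ico 3 (n + 1), ∑ f : Fin k ↪ Fin n,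
          μ {ω | ∀ e ∈ cycleEdges f, ω.1 e = true} :=
        (measure_mono hcover).trans <| (measure_biUnion_finset_le _ _).trans <|
          Finset.sum_le_sum fun k _ => measure_iUnion_fintype_le μ _
    _ = ∑ k ∈ Finset.Ico 3 (n + 1), (n.descFactorial k : ENNReal) * ENNReal.ofReal q ^ k := by
        refine Finset.sum_congr rfl fun k hk => ?_
        simp only [hμ, card_cycleEdges (Finset.mem_Ico.mp hk).1, Finset.sum_const,
          Finset.card_univ, Fintype.card_embedding_eq, Fintype.card_fin, nsmul_eq_mul]
    _ ≤ ∑ k ∈ Finset.Ico 3 (n + 1), ENNReal.ofReal (((n : ℝ) * q) ^ k) := by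
        refine Finset.sum_le_sum fun k _ => ?_
        rw [mul_pow, ENNReal.ofReal_mul (by positivity), ENNReal.ofReal_pow hq,
          ← Nat.cast_pow, ENNReal.ofReal_natCast]
        gcongr
        exact_mod_cast n.descFactorial_le_pow k
    _ = ENNReal.ofReal (∑ k ∈ Finset.Ico 3 (n + 1), ((n : ℝ) * q) ^ k) :=
        (ENNReal.ofReal_sum_of_nonneg fun k _ => by positivity).symm

lemma tendsto_measure_not_isAcyclic_erGraph (p : ℕ → ℝ) (hp : ∀ n, 0 ≤ p n)
    (hlim : Tendsto (fun n : ℕ => (n : ℝ) * p n) atTop (nhds 0)) {β : ℕ → Type*}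
    [∀ n, MeasurableSpace (β n)] (μ : ∀ n, Measure ((Sym2 (Fin n) → Bool) × β n))
    (hμ : ∀ n (s : Finset (Sym2 (Fin n))),
      μ n {ω | ∀ e ∈ s, ω.1 e = true} = ENNReal.ofReal (p n) ^ s.card) :
    Tendsto (fun n => μ n {ω | ¬(erGraph n ω.1).IsAcyclic}) atTop (nhds 0) := by
  have hbound : Tendsto (fun n : ℕ => ((n : ℝ) * p n) ^ 3 / (1 - (n : ℝ) * p n)) atTop
      (nhds 0) := by
    simpa [Pi.div_def] using (hlim.pow 3).div (tendsto_const_nhds.sub hlim) (by norm_num)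
  refine tendsto_of_tendsto_of_tendsto_of_le_of_le' tendsto_const_nhds
    (by simpa using ENNReal.tendsto_ofReal hbound) (Eventually.of_forall fun _ => zero_le) ?_
  filter_upwards [hlim.eventually (gt_mem_nhds one_pos)] with n hn
  exact (measure_not_isAcyclic_erGraph_le (μ n) (hp n) (hμ n)).trans <|
    ENNReal.ofReal_le_ofReal <| geom_sum_Ico_le_of_lt_one (mul_nonneg n.cast_nonneg (hp n)) hn

/-- If `n·p_n → 0`, then a.a.s. the 3-color CCA with uniformly random initial coloring
synchronizes on every connected component of the Erdős–Rényi graph `G(n, p_n)`. -/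
theorem cca_synchronizes_on_subcritical_er
    (p : ℕ → ℝ) (hp : ∀ n, 0 ≤ p n ∧ p n ≤ 1)
    (hlim : Tendsto (fun n : ℕ => (n : ℝ) * p n) atTop (nhds 0))
    (μ : ∀ n : ℕ, Measure ((Sym2 (Fin n) → Bool) × (Fin n → ZMod 3)))
    (hprob : ∀ n, IsProbabilityMeasure (μ n))
    (hμ : ∀ (n : ℕ) (s : Finset (Sym2 (Fin n))) (c : Sym2 (Fin n) → Bool)
        (u : Finset (Fin n)) (d : Fin n → ZMod 3),
      μ n {ω | (∀ e ∈ s, ω.1 e = c e) ∧ (∀ v ∈ u, ω.2 v = d v)} =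
        (∏ e ∈ s, (if c e then ENNReal.ofReal (p n)
          else ENNReal.ofReal (1 - p n))) * (1 / 3 : ENNReal) ^ u.card) :
    Tendsto (fun n : ℕ =>
      μ n {ω | ∀ x y : Fin n, (erGraph n ω.1).Reachable x y →
        ∃ N : ℕ, ∀ t ≥ N,
          ccaTraj (erGraph n ω.1) ω.2 t x = ccaTraj (erGraph n ω.1) ω.2 t y})
      atTop (nhds (1 : ENNReal)) := by
  have hcyclic : Tendsto (fun n => μ n {ω | ¬(erGraph n ω.1).IsAcyclic}) atTop (nhds 0) :=
    tendsto_measure_not_isAcyclic_erGraph p (fun n => (hp n).1) hlim μ fun n s => by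
      simpa using hμ n s (fun _ => true) ∅ (fun _ => 0)
  refine tendsto_of_tendsto_of_tendsto_of_le_of_le
    (by simpa using ENNReal.Tendsto.sub tendsto_const_nhds hcyclic (Or.inl ENNReal.one_ne_top))
    tendsto_const_nhds (fun n => ?_) fun n => by have := hprob n; exact prob_le_one
  have := hprob n
  rw [tsub_le_iff_right, ← measure_univ (μ := μ n)]
  refine (measure_univ_le_add_compl _).trans (add_le_add le_rfl (measure_mono ?_))
  exact fun ω hω hG => hω fun _ _ hxy => hG.ccaTraj_synchronizes ω.2 hxy
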